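/- For the uniform distribution P on the boundary of the unit semicircular disc (density 1/(2+π) with respect to arc length), the conditional constrained quantization error of the three-point set {(1,0),(0,1),(-1,0)} is strictly less than that of {(1,0),(0,0),(-1,0)}; explicitly, the distortion error of {(1,0),(0,1),(-1,0)} equals (2/(2+π))(1/3 + π - 2√2). -/

import Mathlib

open Real

/-- Squared Euclidean distance in the plane. -/
noncomputable def sqDist (p q : ℝ × ℝ) : ℝ := (p.1 - q.1)^2 + (p.2 - q.2)^2

/-- Distortion error of a three-point set `{p,q,s}` for the uniform distribution
(density `1/(2+π)` w.r.t. arc length) on the boundary of the unit semicircular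
disc (base segment from `(-1,0)` to `(1,0)` together with the upper unit arc). -/
noncomputable def semiErr3 (p q s : ℝ × ℝ) : ℝ :=
  (1 / (2 + π)) *
    ((∫ t in (-1:ℝ)..1, min (sqDist (t, 0) p) (min (sqDist (t, 0) q) (sqDist (t, 0) s))) +
     ∫ t in (0:ℝ)..π,
        min (sqDist (Real.cos t, Real.sin t) p)
          (min (sqDist (Real.cos t, Real.sin t) q) (sqDist (Real.cos t, Real.sin t) s)))

/-!
Each integrand is the squared distance to the nearest of the three points. Cutting the segment
and the arc along the Voronoi cells of the three points, it becomes on every piece a single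
squared distance `sqDist x q`, which is `(t - q.1)² + q.2²` on the segment and
`1 + ‖q‖² - 2 (q.1 cos t + q.2 sin t)` on the arc, and integrates in closed form. For
`{(1,0),(0,1),(-1,0)}` the cells meet the segment at `0` and the arc at `π/4, 3π/4`, giving
`2/3 + (2π - 4√2)`; for `{(1,0),(0,0),(-1,0)}` they meet the segment at `±1/2` and the arc at
`π/3, 2π/3`, giving `1/6 + (5π/3 - 2√3)`. The comparison is then `1/2 + π/3 < 4√2 - 2√3`.
-/

open Set intervalIntegral

theorem sqDist_circle (t : ℝ) (q : ℝ × ℝ) :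
    sqDist (cos t, sin t) q = 1 + q.1 ^ 2 + q.2 ^ 2 - 2 * (q.1 * cos t + q.2 * sin t) := by
  rw [sqDist]; linear_combination sin_sq_add_cos_sq t

theorem integral_sqDist_circle (a b : ℝ) (q : ℝ × ℝ) :
    ∫ t in a..b, sqDist (cos t, sin t) q =
      (1 + q.1 ^ 2 + q.2 ^ 2) * (b - a) - 2 * (q.1 * (sin b - sin a) + q.2 * (cos a - cos b)) := by
  simp only [sqDist_circle]
  rw [integral_sub intervalIntegrable_const (Continuous.intervalIntegrable (by fun_prop) _ _),
    integral_const_mul,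
    integral_add (intervalIntegrable_cos.const_mul _) (intervalIntegrable_sin.const_mul _),
    integral_const_mul, integral_const_mul, integral_cos, integral_sin, integral_const, smul_eq_mul]
  ring

theorem integral_sqDist_axis (a b : ℝ) (q : ℝ × ℝ) :
    ∫ t in a..b, sqDist (t, 0) q = ((b - q.1) ^ 3 - (a - q.1) ^ 3) / 3 + q.2 ^ 2 * (b - a) := by
  simp only [sqDist]
  rw [integral_add (Continuous.intervalIntegrable (by fun_prop) _ _) intervalIntegrable_const,
    integral_comp_sub_right (· ^ 2), integral_pow, integral_const, smul_eq_mul]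
  ring

theorem sin_le_cos_of_mem_Icc {t : ℝ} (h₁ : -(3 * π / 4) ≤ t) (h₂ : t ≤ π / 4) :
    sin t ≤ cos t := by
  have hcos : cos (t + π / 4) = √2 / 2 * (cos t - sin t) := by
    rw [cos_add, cos_pi_div_four, sin_pi_div_four]; ring
  have hnonneg : 0 ≤ cos (t + π / 4) := cos_nonneg_of_mem_Icc ⟨by linarith, by linarith⟩
  have : 0 < √2 := by positivity
  nlinarith

theorem neg_cos_le_sin_of_mem_Icc {t : ℝ} (h₁ : -(π / 4) ≤ t) (h₂ : t ≤ 3 * π / 4) :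
    -cos t ≤ sin t := by
  have hsin : sin (t + π / 4) = √2 / 2 * (sin t + cos t) := by
    rw [sin_add, cos_pi_div_four, sin_pi_div_four]; ring
  have hnonneg : 0 ≤ sin (t + π / 4) := sin_nonneg_of_nonneg_of_le_pi (by linarith) (by linarith)
  have : 0 < √2 := by positivity
  nlinarith

theorem cos_le_sin_of_mem_Icc {t : ℝ} (h₁ : π / 4 ≤ t) (h₂ : t ≤ 5 * π / 4) :
    cos t ≤ sin t := by
  have := sin_le_cos_of_mem_Icc (t := t - π) (by linarith) (by linarith)
  rw [sin_sub_pi, cos_sub_pi] at this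
  linarith

theorem sin_le_neg_cos_of_mem_Icc {t : ℝ} (h₁ : 3 * π / 4 ≤ t) (h₂ : t ≤ 7 * π / 4) :
    sin t ≤ -cos t := by
  have := neg_cos_le_sin_of_mem_Icc (t := t - π) (by linarith) (by linarith)
  rw [sin_sub_pi, cos_sub_pi] at this
  linarith

noncomputable def nearestSqDist (x p q s : ℝ × ℝ) : ℝ :=
  min (sqDist x p) (min (sqDist x q) (sqDist x s))

theorem semiErr3_eq (p q s : ℝ × ℝ) :
    semiErr3 p q s = 1 / (2 + π) * ((∫ t in (-1 : ℝ)..1, nearestSqDist (t, 0) p q s) +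
      ∫ t in (0 : ℝ)..π, nearestSqDist (cos t, sin t) p q s) := rfl

theorem continuous_nearestSqDist {γ : ℝ → ℝ × ℝ} (hγ : Continuous γ) (p q s : ℝ × ℝ) :
    Continuous fun t => nearestSqDist (γ t) p q s := by
  unfold nearestSqDist sqDist; fun_prop

section nearest

variable {x p q s : ℝ × ℝ}

theorem nearestSqDist_eq_left (hq : sqDist x p ≤ sqDist x q) (hs : sqDist x p ≤ sqDist x s) :
    nearestSqDist x p q s = sqDist x p :=
  min_eq_left (le_min hq hs)

theorem nearestSqDist_eq_mid (hp : sqDist x q ≤ sqDist x p) (hs : sqDist x q ≤ sqDist x s) :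
    nearestSqDist x p q s = sqDist x q := by
  rw [nearestSqDist, min_eq_left hs, min_eq_right hp]

theorem nearestSqDist_eq_right (hp : sqDist x s ≤ sqDist x p) (hq : sqDist x s ≤ sqDist x q) :
    nearestSqDist x p q s = sqDist x s := by
  rw [nearestSqDist, min_eq_right hq, min_eq_right hp]

end nearest

theorem integral_eq_add_of_eqOn_Icc {f g₁ g₂ : ℝ → ℝ} {a b c : ℝ} (hf : Continuous f)
    (hab : a ≤ b) (hbc : b ≤ c) (h₁ : EqOn f g₁ (Icc a b)) (h₂ : EqOn f g₂ (Icc b c)) :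
    ∫ t in a..c, f t = (∫ t in a..b, g₁ t) + ∫ t in b..c, g₂ t := by
  rw [← integral_add_adjacent_intervals (hf.intervalIntegrable a b) (hf.intervalIntegrable b c)]
  exact congr_arg₂ (· + ·) (integral_congr (uIcc_of_le hab ▸ h₁))
    (integral_congr (uIcc_of_le hbc ▸ h₂))

theorem integral_eq_add_add_of_eqOn_Icc {f g₁ g₂ g₃ : ℝ → ℝ} {a b c d : ℝ} (hf : Continuous f)
    (hab : a ≤ b) (hbc : b ≤ c) (hcd : c ≤ d) (h₁ : EqOn f g₁ (Icc a b))
    (h₂ : EqOn f g₂ (Icc b c)) (h₃ : EqOn f g₃ (Icc c d)) :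
    ∫ t in a..d, f t = (∫ t in a..b, g₁ t) + (∫ t in b..c, g₂ t) + ∫ t in c..d, g₃ t := by
  rw [integral_eq_add_of_eqOn_Icc hf hab (hbc.trans hcd) h₁ (fun _ _ => rfl),
    integral_eq_add_of_eqOn_Icc hf hbc hcd h₂ h₃, add_assoc]

theorem integral_segment_nearestSqDist_apex :
    ∫ t in (-1 : ℝ)..1, nearestSqDist (t, 0) (1, 0) (0, 1) (-1, 0) = 2 / 3 := by
  rw [integral_eq_add_of_eqOn_Icc (continuous_nearestSqDist (by fun_prop) _ _ _)
      (b := 0) (by norm_num) (by norm_num) (g₁ := fun t => sqDist (t, 0) (-1, 0))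
      (g₂ := fun t => sqDist (t, 0) (1, 0))
      (fun t ⟨h₀, h₁⟩ => nearestSqDist_eq_right (by simp only [sqDist]; nlinarith)
        (by simp only [sqDist]; nlinarith))
      (fun t ⟨h₀, h₁⟩ => nearestSqDist_eq_left (by simp only [sqDist]; nlinarith)
        (by simp only [sqDist]; nlinarith)),
    integral_sqDist_axis, integral_sqDist_axis]
  norm_num

theorem integral_arc_nearestSqDist_apex :
    ∫ t in (0 : ℝ)..π, nearestSqDist (cos t, sin t) (1, 0) (0, 1) (-1, 0) = 2 * π - 4 * √2 := by
  have hπ := pi_pos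
  -- the cut at `3π/4` is written `π - π/4` so that `sin_pi_sub` and `cos_pi_sub` evaluate it
  rw [integral_eq_add_add_of_eqOn_Icc (continuous_nearestSqDist (by fun_prop) _ _ _)
      (b := π / 4) (c := π - π / 4) (by linarith) (by linarith) (by linarith)
      (g₁ := fun t => sqDist (cos t, sin t) (1, 0)) (g₂ := fun t => sqDist (cos t, sin t) (0, 1))
      (g₃ := fun t => sqDist (cos t, sin t) (-1, 0))
      (fun t ⟨h₀, h₁⟩ =>
        have := sin_le_cos_of_mem_Icc (t := t) (by linarith) h₁
        have := cos_nonneg_of_mem_Icc (x := t) ⟨by linarith, by linarith⟩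
        nearestSqDist_eq_left (by norm_num [sqDist_circle]; linarith)
          (by norm_num [sqDist_circle]; linarith))
      (fun t ⟨h₀, h₁⟩ =>
        have := cos_le_sin_of_mem_Icc (t := t) h₀ (by linarith)
        have := neg_cos_le_sin_of_mem_Icc (t := t) (by linarith) (by linarith)
        nearestSqDist_eq_mid (by norm_num [sqDist_circle]; linarith)
          (by norm_num [sqDist_circle]; linarith))
      (fun t ⟨h₀, h₁⟩ =>
        have := cos_nonpos_of_pi_div_two_le_of_le (x := t) (by linarith) (by linarith)
        have := sin_le_neg_cos_of_mem_Icc (t := t) (by linarith) (by linarith)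
        nearestSqDist_eq_right (by norm_num [sqDist_circle]; linarith)
          (by norm_num [sqDist_circle]; linarith)),
    integral_sqDist_circle, integral_sqDist_circle, integral_sqDist_circle]
  norm_num [sin_pi_sub, cos_pi_sub]
  ring

theorem integral_segment_nearestSqDist_center :
    ∫ t in (-1 : ℝ)..1, nearestSqDist (t, 0) (1, 0) (0, 0) (-1, 0) = 1 / 6 := by
  rw [integral_eq_add_add_of_eqOn_Icc (continuous_nearestSqDist (by fun_prop) _ _ _)
      (b := -(1 / 2)) (c := 1 / 2) (by norm_num) (by norm_num) (by norm_num)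
      (g₁ := fun t => sqDist (t, 0) (-1, 0)) (g₂ := fun t => sqDist (t, 0) (0, 0))
      (g₃ := fun t => sqDist (t, 0) (1, 0))
      (fun t ⟨h₀, h₁⟩ => nearestSqDist_eq_right (by simp only [sqDist]; nlinarith)
        (by simp only [sqDist]; nlinarith))
      (fun t ⟨h₀, h₁⟩ => nearestSqDist_eq_mid (by simp only [sqDist]; nlinarith)
        (by simp only [sqDist]; nlinarith))
      (fun t ⟨h₀, h₁⟩ => nearestSqDist_eq_left (by simp only [sqDist]; nlinarith)
        (by simp only [sqDist]; nlinarith)),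
    integral_sqDist_axis, integral_sqDist_axis, integral_sqDist_axis]
  norm_num

theorem integral_arc_nearestSqDist_center :
    ∫ t in (0 : ℝ)..π, nearestSqDist (cos t, sin t) (1, 0) (0, 0) (-1, 0) = 5 * π / 3 - 2 * √3 := by
  have hπ := pi_pos
  rw [integral_eq_add_add_of_eqOn_Icc (continuous_nearestSqDist (by fun_prop) _ _ _)
      (b := π / 3) (c := π - π / 3) (by linarith) (by linarith) (by linarith)
      (g₁ := fun t => sqDist (cos t, sin t) (1, 0)) (g₂ := fun t => sqDist (cos t, sin t) (0, 0))
      (g₃ := fun t => sqDist (cos t, sin t) (-1, 0))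
      (fun t ⟨h₀, h₁⟩ =>
        have h := cos_le_cos_of_nonneg_of_le_pi h₀ (by linarith) h₁
        nearestSqDist_eq_left (by norm_num [sqDist_circle] at h ⊢; linarith)
          (by norm_num [sqDist_circle] at h ⊢; linarith))
      (fun t ⟨h₀, h₁⟩ =>
        have h := cos_le_cos_of_nonneg_of_le_pi (by linarith) (by linarith) h₀
        have h' := cos_le_cos_of_nonneg_of_le_pi (by linarith) (by linarith) h₁
        nearestSqDist_eq_mid (by norm_num [sqDist_circle, cos_pi_sub] at h h' ⊢; linarith)
          (by norm_num [sqDist_circle, cos_pi_sub] at h h' ⊢; linarith))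
      (fun t ⟨h₀, h₁⟩ =>
        have h := cos_le_cos_of_nonneg_of_le_pi (by linarith) h₁ h₀
        nearestSqDist_eq_right (by norm_num [sqDist_circle, cos_pi_sub] at h ⊢; linarith)
          (by norm_num [sqDist_circle, cos_pi_sub] at h ⊢; linarith)),
    integral_sqDist_circle, integral_sqDist_circle, integral_sqDist_circle]
  norm_num [sin_pi_sub, cos_pi_sub]
  ring

theorem stmt5 :
    semiErr3 (1, 0) (0, 1) (-1, 0) = (2 / (2 + π)) * (1/3 + π - 2 * Real.sqrt 2) ∧
    semiErr3 (1, 0) (0, 1) (-1, 0) < semiErr3 (1, 0) (0, 0) (-1, 0) := by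
  rw [semiErr3_eq, semiErr3_eq, integral_segment_nearestSqDist_apex,
    integral_arc_nearestSqDist_apex, integral_segment_nearestSqDist_center,
    integral_arc_nearestSqDist_center]
  refine ⟨by ring, mul_lt_mul_of_pos_left ?_ (by positivity)⟩
  have h₂ : 1.4 < √2 := by rw [lt_sqrt] <;> norm_num
  have h₃ : √3 < 1.75 := by rw [sqrt_lt'] <;> norm_num
  linarith [pi_lt_d2]
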